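/- arXiv:1803.00271 — 3 statements merged into one kernel-verified Lean document; each statement's English description precedes it below -/
import Mathlib

section
/- Let V be a vector space of odd prime dimension p over an algebraically closed field of characteristic zero, and let T : V → V be a linear map whose order is a power of 2. Then Tr(T) ≠ 0. -/
/-!
The trace of `T` is the sum of its `p` eigenvalues (with multiplicity), all of which are
`2^(m+1)`-th roots of unity, i.e. powers of a primitive such root `ζ`. If they summed to zero,
the cyclotomic polynomial `Φ_{2^(m+1)}`, the minimal polynomial of `ζ` over `ℤ`, would divide
`∑ X^{i_j}`; evaluating at `1`, where `Φ_{2^(m+1)}(1) = 2`, gives `2 ∣ p`.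
-/

open Polynomial

theorem Module.End.pow_eq_one_of_isRoot_charpoly {K V : Type*} [Field K] [AddCommGroup V]
    [Module K V] [FiniteDimensional K V] {T : Module.End K V} {n : ℕ} (hT : T ^ n = 1) {μ : K}
    (hμ : T.charpoly.IsRoot μ) : μ ^ n = 1 := by
  obtain ⟨v, hv⟩ := ((T.hasEigenvalue_iff_isRoot_charpoly μ).mpr hμ).exists_hasEigenvector
  have hpow : v = μ ^ n • v := by simpa [hT] using hv.pow_apply n
  exact smul_left_injective K hv.2 (by simpa using hpow.symm)

theorem IsPrimitiveRoot.exists_multiset_map_pow_eq {K : Type*} [CommRing K] [IsDomain K]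
    {ζ : K} {n : ℕ} [NeZero n] (hζ : IsPrimitiveRoot ζ n) {S : Multiset K}
    (hS : ∀ x ∈ S, x ^ n = 1) : ∃ I : Multiset ℕ, I.map (ζ ^ ·) = S := by
  induction S using Multiset.induction_on with
  | empty => exact ⟨0, rfl⟩
  | cons x S ih =>
    obtain ⟨I, hI⟩ := ih fun y hy => hS y (Multiset.mem_cons_of_mem hy)
    obtain ⟨i, -, hi⟩ := hζ.eq_pow_of_pow_eq_one (hS x (Multiset.mem_cons_self x S))
    exact ⟨i ::ₘ I, by rw [Multiset.map_cons, hI, hi]⟩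

theorem IsPrimitiveRoot.dvd_card_of_sum_map_pow_eq_zero {K : Type*} [Field K] [CharZero K]
    {ℓ m : ℕ} [Fact ℓ.Prime] {ζ : K} (hζ : IsPrimitiveRoot ζ (ℓ ^ (m + 1))) (I : Multiset ℕ)
    (hsum : (I.map (ζ ^ ·)).sum = 0) : ℓ ∣ Multiset.card I := by
  have hpos : 0 < ℓ ^ (m + 1) := pow_pos (Fact.out : ℓ.Prime).pos _
  set f : ℤ[X] := (I.map (X ^ ·)).sum
  have hf : aeval ζ f = 0 := by
    simpa [f, map_multiset_sum, Multiset.map_map, Function.comp_def] using hsum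
  have hdvd : cyclotomic (ℓ ^ (m + 1)) ℤ ∣ f := by
    rw [cyclotomic_eq_minpoly hζ hpos]
    exact minpoly.isIntegrallyClosed_dvd (hζ.isIntegral hpos) hf
  have heval : f.eval 1 = Multiset.card I := by
    simp [f, eval_multisetSum, Multiset.map_map]
  have hdvd_one := eval_dvd (x := 1) hdvd
  rw [eval_one_cyclotomic_prime_pow, heval] at hdvd_one
  exact_mod_cast hdvd_one

theorem IsPrimitiveRoot.dvd_card_of_sum_eq_zero {K : Type*} [Field K] [CharZero K]
    {ℓ m : ℕ} [Fact ℓ.Prime] {ζ : K} (hζ : IsPrimitiveRoot ζ (ℓ ^ (m + 1))) {S : Multiset K}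
    (hS : ∀ x ∈ S, x ^ ℓ ^ (m + 1) = 1) (hsum : S.sum = 0) : ℓ ∣ Multiset.card S := by
  have : NeZero (ℓ ^ (m + 1)) := ⟨pow_ne_zero _ (Fact.out : ℓ.Prime).ne_zero⟩
  obtain ⟨I, rfl⟩ := hζ.exists_multiset_map_pow_eq hS
  simpa using hζ.dvd_card_of_sum_map_pow_eq_zero I hsum

theorem stmt9_general {k V : Type*} [Field k] [IsAlgClosed k] [CharZero k] [AddCommGroup V]
    [Module k V] [FiniteDimensional k V] (p : ℕ) (hodd : Odd p)
    (hdim : Module.finrank k V = p) (T : V →ₗ[k] V) (m : ℕ) (hT : T ^ (2 ^ m) = 1) :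
    LinearMap.trace k V T ≠ 0 := by
  have : Fact (Nat.Prime 2) := ⟨Nat.prime_two⟩
  have hsplit := IsAlgClosed.splits T.charpoly
  -- Passing to exponent `2^(m+1)` avoids the case `m = 0`, where `Φ_1(1) = 0`.
  have hT' : T ^ 2 ^ (m + 1) = 1 := by rw [pow_succ, pow_mul, hT, one_pow]
  obtain ⟨ζ, hζ⟩ := HasEnoughRootsOfUnity.exists_primitiveRoot k (2 ^ (m + 1))
  have hcard : Multiset.card T.charpoly.roots = p := by
    rw [splits_iff_card_roots.mp hsplit, T.charpoly_natDegree, hdim]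
  rw [Module.End.trace_eq_sum_roots_charpoly_of_splits hsplit]
  intro hsum
  have htwo_dvd := hζ.dvd_card_of_sum_eq_zero
    (fun x hx => Module.End.pow_eq_one_of_isRoot_charpoly hT' (isRoot_of_mem_roots hx)) hsum
  rw [hcard] at htwo_dvd
  exact Nat.not_even_iff_odd.mpr hodd (even_iff_two_dvd.mpr htwo_dvd)

/-- If `V` has odd prime dimension `p` over an algebraically closed field of
characteristic zero and `T : V → V` is a linear map whose order is a power of 2,
then `Tr(T) ≠ 0`. -/
theorem stmt9 {k V : Type*} [Field k] [IsAlgClosed k] [CharZero k] [AddCommGroup V]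
    [Module k V] [FiniteDimensional k V] (p : ℕ) (hp : p.Prime) (hodd : Odd p)
    (hdim : Module.finrank k V = p) (T : V →ₗ[k] V) (m : ℕ) (hT : T ^ (2 ^ m) = 1) :
    LinearMap.trace k V T ≠ 0 :=
  stmt9_general p hodd hdim T m hT
end

section
/- Let H be a finite-dimensional Hopf algebra over a field k and let λ ∈ H* be a nonzero right integral on H. Suppose H = A ⊕ C as a direct sum of subcoalgebras, where A is a Hopf subalgebra. Then λ vanishes on C and λ restricted to A is a nonzero right integral of A*; moreover the distinguished group-like element of H lies in A. -/
/-!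
Contracting a tensor of `C ⊗ C` against `λ` in the first factor stays in `C`, so the right
integral identity `λ(c₁)c₂ = λ(c)1` puts `λ(c)1` in `C ∩ A = 0`; hence `λ` vanishes on `C`.
Since `H = A ⊕ C` and `λ ≠ 0`, some `u ∈ A` has `λ(u) ≠ 0`, and contracting `Δu ∈ A ⊗ A` in the
second factor gives `λ(u)a ∈ A`, so `a ∈ A`.
-/

open TensorProduct

section Contraction

variable {R M : Type*} [CommSemiring R] [AddCommMonoid M] [Module R M]
  (f : M →ₗ[R] R) {p q : Submodule R M} {x : M ⊗[R] M}

theorem TensorProduct.lid_map_mem_of_mem_range_map_subtype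
    (hx : x ∈ LinearMap.range (map p.subtype q.subtype)) :
    TensorProduct.lid R M (map f LinearMap.id x) ∈ q := by
  obtain ⟨y, rfl⟩ := hx
  induction y using TensorProduct.induction_on with
  | zero => simp
  | tmul u v => simpa using q.smul_mem _ v.2
  | add y z hy hz => simpa only [map_add] using q.add_mem hy hz

theorem TensorProduct.rid_map_mem_of_mem_range_map_subtype
    (hx : x ∈ LinearMap.range (map p.subtype q.subtype)) :
    TensorProduct.rid R M (map LinearMap.id f x) ∈ p := by
  obtain ⟨y, rfl⟩ := hx
  induction y using TensorProduct.induction_on with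
  | zero => simp
  | tmul u v => simpa using p.smul_mem _ u.2
  | add y z hy hz => simpa only [map_add] using p.add_mem hy hz

end Contraction

theorem LinearMap.exists_mem_apply_ne_zero_of_codisjoint {R M N : Type*} [Semiring R]
    [AddCommMonoid M] [AddCommMonoid N] [Module R M] [Module R N] {f : M →ₗ[R] N} (hf : f ≠ 0)
    {p q : Submodule R M} (hpq : Codisjoint p q) (hq : ∀ c ∈ q, f c = 0) :
    ∃ u ∈ p, f u ≠ 0 := by
  by_contra! hp
  refine hf (LinearMap.ker_eq_top.mp (eq_top_iff.mpr ?_))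
  rw [← hpq.eq_top]
  exact sup_le hp hq

theorem Subalgebra.eq_zero_of_smul_one_mem_of_disjoint {k H : Type*} [Field k] [Ring H]
    [Nontrivial H] [Algebra k H] (A : Subalgebra k H) {C : Submodule k H}
    (hAC : Disjoint (Subalgebra.toSubmodule A) C) {t : k} (ht : t • (1 : H) ∈ C) : t = 0 := by
  have h : t • (1 : H) = 0 :=
    Submodule.disjoint_def.mp hAC _ (Subalgebra.toSubmodule A |>.smul_mem t A.one_mem) ht
  simpa using h

theorem stmt12_general {k : Type*} [Field k] (H : Type*) [Ring H] [HopfAlgebra k H]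
    (lam : H →ₗ[k] k) (hlam0 : lam ≠ 0)
    (hint : ∀ h : H, (TensorProduct.lid k H)
        ((TensorProduct.map lam LinearMap.id) (Coalgebra.comul (R := k) h)) =
      lam h • (1 : H))
    (a : H)
    (ha_dist : ∀ h : H, (TensorProduct.rid k H)
        ((TensorProduct.map LinearMap.id lam) (Coalgebra.comul (R := k) h)) =
      lam h • a)
    (A : Subalgebra k H)
    (hA_comul : ∀ u ∈ A, Coalgebra.comul (R := k) u ∈
      LinearMap.range (TensorProduct.map A.toSubmodule.subtype A.toSubmodule.subtype))
    (C : Submodule k H)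
    (hC_comul : ∀ c ∈ C, Coalgebra.comul (R := k) c ∈
      LinearMap.range (TensorProduct.map C.subtype C.subtype))
    (hdecomp : IsCompl A.toSubmodule C) :
    (∀ c ∈ C, lam c = 0) ∧
      (∃ u ∈ A, lam u ≠ 0) ∧
      (∀ u ∈ A, (TensorProduct.lid k H)
          ((TensorProduct.map lam LinearMap.id) (Coalgebra.comul (R := k) u)) =
        lam u • (1 : H)) ∧
      a ∈ A := by
  have : Nontrivial H := by
    by_contra hH
    rw [not_nontrivial_iff_subsingleton] at hH
    exact hlam0 (Subsingleton.elim _ _)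
  have hvanish : ∀ c ∈ C, lam c = 0 := fun c hc =>
    A.eq_zero_of_smul_one_mem_of_disjoint hdecomp.disjoint
      (hint c ▸ lid_map_mem_of_mem_range_map_subtype lam (hC_comul c hc))
  obtain ⟨u, hu, hlu⟩ := LinearMap.exists_mem_apply_ne_zero_of_codisjoint hlam0
    hdecomp.codisjoint hvanish
  refine ⟨hvanish, ⟨u, hu, hlu⟩, fun v _ => hint v, ?_⟩
  exact (Submodule.smul_mem_iff _ hlu).mp
    (ha_dist u ▸ rid_map_mem_of_mem_range_map_subtype lam (hA_comul u hu))

/-- Let `H` be a finite-dimensional Hopf algebra, `λ` a nonzero right integral on `H`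
(so `h ↼ λ = λ(h)1` for all `h`), with distinguished group-like element `a`
(so `λ ⇀ h = λ(h)a` for all `h`).  Suppose `H = A ⊕ C` is a direct sum of
subcoalgebras where `A` is a Hopf subalgebra.  Then `λ` vanishes on `C`, `λ`
restricted to `A` is a nonzero right integral of `A*`, and the distinguished
group-like element `a` lies in `A`. -/
theorem stmt12 {k : Type*} [Field k] (H : Type*) [Ring H] [HopfAlgebra k H]
    [FiniteDimensional k H]
    (lam : H →ₗ[k] k) (hlam0 : lam ≠ 0)
    (hint : ∀ h : H, (TensorProduct.lid k H)
        ((TensorProduct.map lam LinearMap.id) (Coalgebra.comul (R := k) h)) =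
      lam h • (1 : H))
    (a : H) (ha_grp : Coalgebra.comul (R := k) a = a ⊗ₜ[k] a ∧
      Coalgebra.counit (R := k) a = 1)
    (ha_dist : ∀ h : H, (TensorProduct.rid k H)
        ((TensorProduct.map LinearMap.id lam) (Coalgebra.comul (R := k) h)) =
      lam h • a)
    (A : Subalgebra k H)
    (hA_comul : ∀ u ∈ A, Coalgebra.comul (R := k) u ∈
      LinearMap.range (TensorProduct.map A.toSubmodule.subtype A.toSubmodule.subtype))
    (hA_antipode : ∀ u ∈ A, HopfAlgebra.antipode (R := k) u ∈ A)
    (C : Submodule k H)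
    (hC_comul : ∀ c ∈ C, Coalgebra.comul (R := k) c ∈
      LinearMap.range (TensorProduct.map C.subtype C.subtype))
    (hdecomp : IsCompl A.toSubmodule C) :
    (∀ c ∈ C, lam c = 0) ∧
      (∃ u ∈ A, lam u ≠ 0) ∧
      (∀ u ∈ A, (TensorProduct.lid k H)
          ((TensorProduct.map lam LinearMap.id) (Coalgebra.comul (R := k) u)) =
        lam u • (1 : H)) ∧
      a ∈ A :=
  stmt12_general H lam hlam0 hint a ha_dist A hA_comul C hC_comul hdecomp
end

section
/- Let p be an odd prime, ξ a primitive 2p-th root of unity, and consider the 2-dimensional modules U_i (i ∈ ℤ/2p) over the algebra A generated by commuting a, x and an element z with ax = xa, az = za, xz = -zx, a² = 1, x^{2p} = 1, z² = a - 1, where the action on basis u₁, u₂ of U_i is: a·u_j = -u_j, x·u_j = (-1)^{j-1} ξ^i u_j, z·u₁ = u₂, z·u₂ = -2u₁. Then each U_i is a simple A-module. -/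
/-!
Any nonzero submodule `N` of `U_i` contains a vector `v = c₀ u₀ + c₁ u₁` with, say, `c₀ ≠ 0`.
Since `u₀, u₁` are eigenvectors of `x` for the distinct eigenvalues `±ξ^i`, the vector
`x v + ξ^i v = 2 ξ^i c₀ u₀` lies in `N`, so `u₀ ∈ N`; then `z` carries `u₀` to a nonzero
multiple of `u₁` and back, so `N` contains the whole basis.
-/

section

variable {k A U : Type*} [Field k] [Ring A] [Algebra k A] [AddCommGroup U] [Module k U]
  [Module A U] [IsScalarTower k A U]

theorem Submodule.eq_top_of_forall_basis_mem {ι : Type*} (u : Module.Basis ι k U)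
    {N : Submodule A U} (hN : ∀ j, u j ∈ N) : N = ⊤ := by
  rw [← Submodule.restrictScalars_eq_top_iff k, eq_top_iff, ← u.span_eq, Submodule.span_le]
  exact Set.range_subset_iff.2 hN

theorem Submodule.mem_of_smul_of_tower_mem {N : Submodule A U} {c : k} (hc : c ≠ 0) {v : U}
    (hv : c • v ∈ N) : v ∈ N := by
  simpa [smul_smul, inv_mul_cancel₀ hc] using N.smul_of_tower_mem c⁻¹ hv

theorem Submodule.mem_of_eigenvector_component_ne_zero {N : Submodule A U} {x : A}
    {e f v : U} {μ ν c d : k} (hμν : μ ≠ ν) (hc : c ≠ 0) (he : x • e = μ • e)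
    (hf : x • f = ν • f) (hv : v = c • e + d • f) (hvN : v ∈ N) : e ∈ N := by
  have hproj : x • v - ν • v = (c * (μ - ν)) • e := by
    rw [hv, smul_add, smul_comm x c, smul_comm x d, he, hf]
    module
  refine N.mem_of_smul_of_tower_mem (mul_ne_zero hc (sub_ne_zero.2 hμν)) ?_
  rw [← hproj]
  exact N.sub_mem (N.smul_mem x hvN) (N.smul_of_tower_mem ν hvN)

theorem isSimpleModule_of_eigenbasis_of_swap (u : Module.Basis (Fin 2) k U) {x z : A}
    {μ₀ μ₁ c₀ c₁ : k} (hμ : μ₀ ≠ μ₁) (hc₀ : c₀ ≠ 0) (hc₁ : c₁ ≠ 0)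
    (hx0 : x • u 0 = μ₀ • u 0) (hx1 : x • u 1 = μ₁ • u 1)
    (hz0 : z • u 0 = c₀ • u 1) (hz1 : z • u 1 = c₁ • u 0) :
    IsSimpleModule A U := by
  have : Nontrivial U := nontrivial_of_ne _ _ (u.ne_zero 0)
  refine (isSimpleModule_iff A U).2 ⟨fun N ↦ or_iff_not_imp_left.2 fun hN ↦ ?_⟩
  obtain ⟨v, hvN, hv0⟩ := N.ne_bot_iff.1 hN
  have hv : v = u.repr v 0 • u 0 + u.repr v 1 • u 1 := by
    simpa only [Fin.sum_univ_two] using (u.sum_repr v).symm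
  have h01 : u 0 ∈ N → u 1 ∈ N := fun h ↦
    N.mem_of_smul_of_tower_mem hc₀ (hz0 ▸ N.smul_mem z h)
  have h10 : u 1 ∈ N → u 0 ∈ N := fun h ↦
    N.mem_of_smul_of_tower_mem hc₁ (hz1 ▸ N.smul_mem z h)
  have hu0 : u 0 ∈ N := by
    by_cases hr : u.repr v 0 = 0
    · have hr1 : u.repr v 1 ≠ 0 := fun hr1 ↦ hv0 (by rw [hv, hr, hr1, zero_smul, zero_smul, add_zero])
      exact h10 <| N.mem_of_eigenvector_component_ne_zero hμ.symm hr1 hx1 hx0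
        (hv.trans (add_comm _ _)) hvN
    · exact N.mem_of_eigenvector_component_ne_zero hμ hr hx0 hx1 hv hvN
  exact Submodule.eq_top_of_forall_basis_mem u (Fin.forall_fin_two.2 ⟨hu0, h01 hu0⟩)

end

theorem stmt16_general {k : Type*} [Field k] [CharZero k]
    (p : ℕ) (hp : p.Prime) (ξ : k) (hξ : IsPrimitiveRoot ξ (2 * p))
    (A : Type*) [Ring A] [Algebra k A] (x z : A)
    (i : ℕ) (U : Type*) [AddCommGroup U] [Module k U] [Module A U]
    [IsScalarTower k A U] (u : Module.Basis (Fin 2) k U)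
    (hx0 : x • u 0 = ξ ^ i • u 0) (hx1 : x • u 1 = (-(ξ ^ i)) • u 1)
    (hz0 : z • u 0 = u 1) (hz1 : z • u 1 = ((-2 : k)) • u 0) :
    IsSimpleModule A U := by
  have hξi : ξ ^ i ≠ 0 := pow_ne_zero _ (hξ.ne_zero (mul_ne_zero two_ne_zero hp.ne_zero))
  have hμ : ξ ^ i ≠ -ξ ^ i := fun h ↦ hξi (by linear_combination h / 2)
  exact isSimpleModule_of_eigenbasis_of_swap u hμ one_ne_zero (by norm_num) hx0 hx1
    (by rwa [one_smul]) hz1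

/-- Let `A` be the algebra generated by `a, x, z` with `a² = 1`, `x^{2p} = 1`,
`z² = a - 1`, `ax = xa`, `az = za`, `xz = -zx` (over an algebraically closed field of
characteristic zero, `p` an odd prime, `ξ` a primitive `2p`-th root of unity).
The 2-dimensional module `U_i` with basis `u₀, u₁` and action
`a·u_j = -u_j`, `x·u₀ = ξ^i u₀`, `x·u₁ = -ξ^i u₁`, `z·u₀ = u₁`, `z·u₁ = -2u₀`
is a simple `A`-module. -/
theorem stmt16 {k : Type*} [Field k] [IsAlgClosed k] [CharZero k]
    (p : ℕ) (hp : p.Prime) (hodd : Odd p) (ξ : k) (hξ : IsPrimitiveRoot ξ (2 * p))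
    (A : Type*) [Ring A] [Algebra k A] (a x z : A)
    (h1 : a * a = 1) (h2 : x ^ (2 * p) = 1) (h3 : z * z = a - 1)
    (h4 : a * x = x * a) (h5 : a * z = z * a) (h6 : x * z = -(z * x))
    (i : ℕ) (U : Type*) [AddCommGroup U] [Module k U] [Module A U]
    [IsScalarTower k A U] (u : Module.Basis (Fin 2) k U)
    (ha : ∀ j, a • u j = -u j)
    (hx0 : x • u 0 = ξ ^ i • u 0) (hx1 : x • u 1 = (-(ξ ^ i)) • u 1)
    (hz0 : z • u 0 = u 1) (hz1 : z • u 1 = ((-2 : k)) • u 0) :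
    IsSimpleModule A U :=
  stmt16_general p hp ξ hξ A x z i U u hx0 hx1 hz0 hz1
end
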